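/- arXiv:2109.03434 — 3 statements merged into one kernel-verified Lean document; each statement's English description precedes it below -/
import Mathlib

section
/- Suppose the feasible set of the centralized problem (7) is nonempty, i.e., there exists Δd ∈ ℝ^n with D̲_k ≤ d_k + Δd_k ≤ D̄_k for all k and (d_k + Δd_k − c_k)_{k=1,…,n} ∈ Q. Then the energy-sharing game has at least one generalized Nash equilibrium (Δd*, q*, q^{c*}, δ*). -/
open Finset

/-- The set `Q` of feasible sharing schedules: total exchange is zero and all
line-flow limits are respected. -/
def Qset {n L : ℕ} (π : Fin L → Fin n → ℝ) (F : Fin L → ℝ) : Set (Fin n → ℝ) :=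
  {qc | (∑ k, qc k) = 0 ∧
    ∀ l : Fin L, -F l ≤ ∑ k, π l k * qc k ∧ ∑ k, π l k * qc k ≤ F l}

/-- `c k = 0` for consumers `k < I` and `c k = w k + Δw k` for prosumers. -/
def cvec (I J : ℕ) (w Δw : Fin (I + J) → ℝ) : Fin (I + J) → ℝ :=
  fun k => if (k : ℕ) < I then 0 else w k + Δw k

/-- Generalized Nash equilibrium of the energy-sharing game:
(i) each user's `(Δd k, q k)` minimizes its disutility plus penalty over its own
feasible set (parameterized by `qc k` and `δ k`);
(ii) the operator's `(qc, δ)` minimizes `∑ δ_k²` over its feasible set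
(parameterized by `q`). -/
def IsGNE {n L : ℕ} (α β ζ d c Dlo Dhi : Fin n → ℝ) (τ : ℝ)
    (π : Fin L → Fin n → ℝ) (F : Fin L → ℝ)
    (Δd q qc δ : Fin n → ℝ) : Prop :=
  (∀ k : Fin n,
    (q k + δ k = d k + Δd k - c k ∧ Dlo k ≤ d k + Δd k ∧ d k + Δd k ≤ Dhi k) ∧
    (∀ x y : ℝ, y + δ k = d k + x - c k → Dlo k ≤ d k + x → d k + x ≤ Dhi k →
      (α k * (Δd k) ^ 2 + β k * Δd k + ζ k) + τ / 2 * (qc k - q k) ^ 2 ≤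
      (α k * x ^ 2 + β k * x + ζ k) + τ / 2 * (qc k - y) ^ 2)) ∧
  ((∀ k, δ k = qc k - q k) ∧ qc ∈ Qset π F ∧
    (∀ qc' δ' : Fin n → ℝ, (∀ k, δ' k = qc' k - q k) → qc' ∈ Qset π F →
      ∑ k, (δ k) ^ 2 ≤ ∑ k, (δ' k) ^ 2))

/-- Feasibility for the centralized problem (7). -/
def Feasible7 {n L : ℕ} (d c Dlo Dhi : Fin n → ℝ)
    (π : Fin L → Fin n → ℝ) (F : Fin L → ℝ) (Δd : Fin n → ℝ) : Prop :=
  (∀ k, Dlo k ≤ d k + Δd k ∧ d k + Δd k ≤ Dhi k) ∧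
  (fun k => d k + Δd k - c k) ∈ Qset π F

/-!
The centralized problem (7) minimizes a continuous function over the compact polyhedron
`B ∩ Q'`, where `B` is the demand box and `Q'` the preimage of `Q` in the `Δd` variables, so it has
a solution `Δd*`. For polyhedra the normal cone of an intersection is the sum of the normal cones
(Karush–Kuhn–Tucker: Farkas' lemma, whose finitely generated cone is closed by Carathéodory's
theorem). Hence the optimality condition `-∇f(Δd*) ∈ N_{B ∩ Q'}(Δd*)` splits as `v₁ + v₂` with
`v₁ ∈ N_B(Δd*)` and `v₂ ∈ N_{Q'}(Δd*)`. Put `qc* = d + Δd* - c`, `δ* = -v₂/τ`, `q* = qc* - δ*`.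
User `k`'s problem is convex in `Δd_k`, and its first-order condition at `Δd*_k` is the `k`-th
coordinate of `v₁ ∈ N_B`; and `q* - qc* ∈ N_Q(qc*)` says that `qc*` is the projection of `q*`
onto `Q`, which is the operator's problem.
-/
open Filter Topology

section ConicHull

variable {E ι : Type*} [AddCommGroup E] [Module ℝ E]

theorem exists_nonneg_sum_erase_eq [DecidableEq ι] {a : ι → E} {s : Finset ι}
    (hs : ¬LinearIndepOn ℝ a (s : Set ι)) {w : ι → ℝ} (hw : ∀ i ∈ s, 0 ≤ w i) :
    ∃ i₀ ∈ s, ∃ w' : ι → ℝ, (∀ i ∈ s.erase i₀, 0 ≤ w' i) ∧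
      ∑ i ∈ s.erase i₀, w' i • a i = ∑ i ∈ s, w i • a i := by
  obtain ⟨g, hg, j, hjs, hgj⟩ : ∃ g : ι → ℝ, ∑ i ∈ s, g i • a i = 0 ∧ ∃ j ∈ s, 0 < g j := by
    simp only [linearIndepOn_finset_iff, not_forall] at hs
    obtain ⟨g, hg, j, hjs, hgj⟩ := hs
    rcases Ne.lt_or_gt hgj with hneg | hpos
    · exact ⟨-g, by simp [neg_smul, hg], j, hjs, by simpa using hneg⟩
    · exact ⟨g, hg, j, hjs, hpos⟩
  -- move along the relation `g` until the first coefficient with `g i > 0` hits zero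
  obtain ⟨i₀, hi₀, hmin⟩ := (s.filter (0 < g ·)).exists_min_image (fun i => w i / g i)
    ⟨j, Finset.mem_filter.mpr ⟨hjs, hgj⟩⟩
  obtain ⟨hi₀s, hgi₀⟩ := Finset.mem_filter.mp hi₀
  refine ⟨i₀, hi₀s, fun i => w i - w i₀ / g i₀ * g i, fun i hi => ?_, ?_⟩
  · have his := Finset.mem_of_mem_erase hi
    rcases le_or_gt (g i) 0 with hgi | hgi
    · nlinarith [hw i his, div_nonneg (hw i₀ hi₀s) hgi₀.le]
    · have := hmin i (Finset.mem_filter.mpr ⟨his, hgi⟩)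
      rw [le_div_iff₀ hgi] at this
      linarith
  · rw [Finset.sum_erase _ (by simp [div_mul_cancel₀ _ hgi₀.ne'])]
    simp only [sub_smul, Finset.sum_sub_distrib, mul_smul, ← Finset.smul_sum, hg, smul_zero,
      sub_zero]

variable [Fintype ι]

def conicHull (a : ι → E) : PointedCone ℝ E :=
  (PointedCone.positive ℝ (ι → ℝ)).map (Fintype.linearCombination ℝ a)

theorem mem_conicHull {a : ι → E} {x : E} :
    x ∈ conicHull a ↔ ∃ w : ι → ℝ, 0 ≤ w ∧ ∑ i, w i • a i = x := by
  simp [conicHull, PointedCone.mem_map, Fintype.linearCombination_apply]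

theorem apply_mem_conicHull (a : ι → E) (i : ι) : a i ∈ conicHull a := by
  classical
  exact mem_conicHull.mpr ⟨Pi.single i 1, Pi.single_nonneg.mpr zero_le_one, by simp⟩

theorem conicHull_le {a : ι → E} {C : PointedCone ℝ E} (h : ∀ i, a i ∈ C) :
    conicHull a ≤ C := by
  intro x hx
  obtain ⟨w, hw, rfl⟩ := mem_conicHull.mp hx
  exact C.sum_mem fun i _ => C.smul_mem (hw i) (h i)

/-- Carathéodory's theorem for cones. -/
theorem exists_linearIndepOn_mem_conicHull {a : ι → E} {x : E} (hx : x ∈ conicHull a) :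
    ∃ t : Finset ι, LinearIndepOn ℝ a (t : Set ι) ∧ x ∈ conicHull (fun i : t => a i) := by
  classical
  suffices H : ∀ s : Finset ι, ∀ w : ι → ℝ, (∀ i ∈ s, 0 ≤ w i) → ∃ t : Finset ι,
      LinearIndepOn ℝ a (t : Set ι) ∧ ∑ i ∈ s, w i • a i ∈ conicHull (fun i : t => a i) by
    obtain ⟨w, hw, rfl⟩ := mem_conicHull.mp hx
    exact H Finset.univ w fun i _ => hw i
  intro s
  induction s using Finset.strongInduction with
  | H s ih =>
    intro w hw
    by_cases hs : LinearIndepOn ℝ a (s : Set ι)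
    · exact ⟨s, hs, mem_conicHull.mpr
        ⟨fun i => w i, fun i => hw i i.2, Finset.sum_coe_sort s fun i => w i • a i⟩⟩
    · obtain ⟨i₀, hi₀, w', hw', heq⟩ := exists_nonneg_sum_erase_eq hs hw
      rw [← heq]
      exact ih _ (Finset.erase_ssubset hi₀) w' hw'

variable [TopologicalSpace E] [IsTopologicalAddGroup E] [ContinuousSMul ℝ E] [T2Space E]

theorem LinearIndependent.isClosed_conicHull {a : ι → E} (ha : LinearIndependent ℝ a) :
    IsClosed (conicHull a : Set E) := by
  have hemb := LinearMap.isClosedEmbedding_of_injective (LinearMap.ker_eq_bot.mpr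
    (linearIndependent_iff_injective_fintypeLinearCombination.mp ha))
  simpa [conicHull] using hemb.isClosedMap _ (isClosed_Ici (a := (0 : ι → ℝ)))

theorem isClosed_conicHull (a : ι → E) : IsClosed (conicHull a : Set E) := by
  have heq : (conicHull a : Set E) = ⋃ t : {t : Finset ι // LinearIndepOn ℝ a (t : Set ι)},
      (conicHull (fun i : t.1 => a i) : Set E) := by
    refine subset_antisymm (fun x hx => ?_) (Set.iUnion_subset fun t => ?_)
    · obtain ⟨t, ht, hxt⟩ := exists_linearIndepOn_mem_conicHull hx
      exact Set.mem_iUnion.mpr ⟨⟨t, ht⟩, hxt⟩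
    · exact conicHull_le fun i => apply_mem_conicHull a i
  rw [heq]
  exact isClosed_iUnion_of_finite fun t => t.2.isClosed_conicHull

end ConicHull

/-- **Farkas' lemma**. -/
theorem mem_conicHull_of_forall_dotProduct_nonpos {ι n : Type*} [Fintype ι] [Fintype n]
    {a : ι → n → ℝ} {v : n → ℝ} (h : ∀ y, (∀ i, a i ⬝ᵥ y ≤ 0) → v ⬝ᵥ y ≤ 0) :
    v ∈ conicHull a := by
  classical
  by_contra hv
  obtain ⟨f, hfC, hfv⟩ := ProperCone.hyperplane_separation_point
    (⟨conicHull a, isClosed_conicHull a⟩ : ProperCone ℝ (n → ℝ)) hv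
  set y : n → ℝ := fun j => f fun k => if j = k then 1 else 0
  have hf : ∀ x, f x = x ⬝ᵥ y := fun x => by
    simpa [dotProduct] using LinearMap.pi_apply_eq_sum_univ (f : (n → ℝ) →ₗ[ℝ] ℝ) x
  have := h (-y) fun i => by
    simpa [dotProduct_neg, ← hf] using hfC (a i) (apply_mem_conicHull a i)
  rw [dotProduct_neg, ← hf] at this
  linarith

theorem eventually_add_mul_le {g t b : ℝ} (hgb : g ≤ b) (hact : g = b → t ≤ 0) :
    ∀ᶠ ε in 𝓝[>] (0 : ℝ), g + ε * t ≤ b := by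
  rcases le_or_gt t 0 with ht | ht
  · filter_upwards [self_mem_nhdsWithin] with ε (hε : 0 < ε)
    nlinarith
  · have hlim : Tendsto (fun ε : ℝ => g + ε * t) (𝓝[>] 0) (𝓝 g) := by
      refine tendsto_nhdsWithin_of_tendsto_nhds ?_
      exact (by fun_prop : Continuous fun ε : ℝ => g + ε * t).tendsto' 0 g (by simp)
    exact (hlim.eventually_lt_const (hgb.lt_of_ne fun h => (hact h).not_gt ht)).mono
      fun _ => le_of_lt

theorem nonneg_of_forall_Ioc_mul_add_sq_nonneg {G H : ℝ}
    (h : ∀ t ∈ Set.Ioc (0 : ℝ) 1, 0 ≤ t * G + t ^ 2 * H) : 0 ≤ G := by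
  have hlim : Tendsto (fun t : ℝ => G + t * H) (𝓝[>] 0) (𝓝 G) := by
    refine tendsto_nhdsWithin_of_tendsto_nhds ?_
    exact (by fun_prop : Continuous fun t : ℝ => G + t * H).tendsto' 0 G (by simp)
  refine ge_of_tendsto hlim ?_
  filter_upwards [Ioc_mem_nhdsGT zero_lt_one] with t ht
  refine (mul_nonneg_iff_of_pos_left ht.1).mp ?_
  linarith [h t ht]

section NormalCone

variable {n : Type*} [Fintype n]

def normalCone (S : Set (n → ℝ)) (x : n → ℝ) : Set (n → ℝ) := {v | ∀ u ∈ S, v ⬝ᵥ (u - x) ≤ 0}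

theorem normalCone_preimage_add_const (S : Set (n → ℝ)) (t x : n → ℝ) :
    normalCone ((· + t) ⁻¹' S) x = normalCone S (x + t) := by
  ext v
  refine ⟨fun hv u hu => ?_, fun hv u hu => ?_⟩
  · have := hv (u - t) (by simpa using hu)
    rwa [sub_sub, add_comm t] at this
  · simpa [add_sub_add_right_eq_sub] using hv (u + t) hu

theorem smul_mem_normalCone {S : Set (n → ℝ)} {x v : n → ℝ} {c : ℝ} (hc : 0 ≤ c)
    (hv : v ∈ normalCone S x) : c • v ∈ normalCone S x := fun u hu => by
  rw [smul_dotProduct, smul_eq_mul]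
  exact mul_nonpos_of_nonneg_of_nonpos hc (hv u hu)

theorem apply_mul_sub_nonpos_of_mem_normalCone_Icc [DecidableEq n] {lo hi x v : n → ℝ}
    (hv : v ∈ normalCone (Set.Icc lo hi) x) (hx : x ∈ Set.Icc lo hi) {k : n} {y : ℝ}
    (hy : y ∈ Set.Icc (lo k) (hi k)) : v k * (y - x k) ≤ 0 := by
  rw [← Set.pi_univ_Icc] at hv hx
  have hsub : Function.update x k y - x = Pi.single k (y - x k) := by
    ext j
    by_cases h : j = k <;> simp [h]
  simpa [hsub, dotProduct_single] using
    hv _ ((Set.update_mem_pi_iff_of_mem hx).mpr fun _ => hy)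

theorem sum_sq_le_sum_add_sq {δ w : n → ℝ} (h : 0 ≤ δ ⬝ᵥ w) :
    ∑ k, δ k ^ 2 ≤ ∑ k, (δ k + w k) ^ 2 := by
  have : ∑ k, (δ k + w k) ^ 2 = ∑ k, δ k ^ 2 + 2 * (δ ⬝ᵥ w) + ∑ k, w k ^ 2 := by
    simp only [dotProduct, Finset.mul_sum, ← Finset.sum_add_distrib]
    exact Finset.sum_congr rfl fun k _ => by ring
  nlinarith [Finset.sum_nonneg fun k (_ : k ∈ Finset.univ) => sq_nonneg (w k)]

theorem sum_sq_sub_le_of_sub_mem_normalCone {S : Set (n → ℝ)} {p q u : n → ℝ}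
    (h : q - p ∈ normalCone S p) (hu : u ∈ S) :
    ∑ k, (p k - q k) ^ 2 ≤ ∑ k, (u k - q k) ^ 2 := by
  have hnn : 0 ≤ (p - q) ⬝ᵥ (u - p) := by
    have := h u hu
    rwa [← neg_sub p q, neg_dotProduct, neg_nonpos] at this
  refine (sum_sq_le_sum_add_sq hnn).trans_eq (Finset.sum_congr rfl fun k _ => ?_)
  simp only [Pi.sub_apply]
  ring

theorem IsMinOn.neg_gradient_mem_normalCone {α β ζ x : n → ℝ} {S : Set (n → ℝ)}
    (hmin : IsMinOn (fun y => ∑ k, (α k * y k ^ 2 + β k * y k + ζ k)) S x)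
    (hS : Convex ℝ S) (hx : x ∈ S) :
    -(fun k => 2 * α k * x k + β k) ∈ normalCone S x := by
  intro u hu
  rw [neg_dotProduct, neg_nonpos]
  refine nonneg_of_forall_Ioc_mul_add_sq_nonneg (H := ∑ k, α k * (u k - x k) ^ 2) fun t ht => ?_
  have hexp : ∑ k, (α k * (x + t • (u - x)) k ^ 2 + β k * (x + t • (u - x)) k + ζ k) =
      ∑ k, (α k * x k ^ 2 + β k * x k + ζ k) +
        (t * ((fun k => 2 * α k * x k + β k) ⬝ᵥ (u - x)) + t ^ 2 * ∑ k, α k * (u k - x k) ^ 2) := by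
    simp only [Pi.add_apply, Pi.smul_apply, Pi.sub_apply, smul_eq_mul, dotProduct,
      Finset.mul_sum, ← Finset.sum_add_distrib]
    exact Finset.sum_congr rfl fun k _ => by ring
  have hle : ∑ k, (α k * x k ^ 2 + β k * x k + ζ k) ≤
      ∑ k, (α k * (x + t • (u - x)) k ^ 2 + β k * (x + t • (u - x)) k + ζ k) :=
    hmin (hS.add_smul_sub_mem hx hu ⟨ht.1.le, ht.2⟩)
  linarith

end NormalCone

section Polyhedron

open Pointwise

universe u

variable {n : Type u} {ι : Type*} [Fintype n]

def polyhedron (a : ι → n → ℝ) (b : ι → ℝ) : Set (n → ℝ) := {x | ∀ i, a i ⬝ᵥ x ≤ b i}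

theorem polyhedron_inter_polyhedron {ι' : Type*} (a : ι → n → ℝ) (b : ι → ℝ)
    (a' : ι' → n → ℝ) (b' : ι' → ℝ) :
    polyhedron a b ∩ polyhedron a' b' = polyhedron (Sum.elim a a') (Sum.elim b b') := by
  ext x
  simp [polyhedron, Sum.forall]

theorem sum_smul_mem_normalCone_polyhedron [Fintype ι] {a : ι → n → ℝ} {b : ι → ℝ}
    {x : n → ℝ} {w : ι → ℝ} (hw : 0 ≤ w) (hslack : ∀ i, a i ⬝ᵥ x < b i → w i = 0) :
    ∑ i, w i • a i ∈ normalCone (polyhedron a b) x := by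
  intro u hu
  rw [sum_dotProduct]
  refine Finset.sum_nonpos fun i _ => ?_
  rw [smul_dotProduct, smul_eq_mul, dotProduct_sub]
  rcases lt_or_ge (a i ⬝ᵥ x) (b i) with hlt | hge
  · simp [hslack i hlt]
  · exact mul_nonpos_of_nonneg_of_nonpos (hw i) (by linarith [hu i])

/-- Karush–Kuhn–Tucker multipliers for a polyhedron. -/
theorem exists_eq_sum_smul_of_mem_normalCone_polyhedron [Fintype ι] {a : ι → n → ℝ}
    {b : ι → ℝ} {x v : n → ℝ} (hx : x ∈ polyhedron a b)
    (hv : v ∈ normalCone (polyhedron a b) x) :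
    ∃ w : ι → ℝ, 0 ≤ w ∧ (∀ i, a i ⬝ᵥ x < b i → w i = 0) ∧ v = ∑ i, w i • a i := by
  classical
  -- Farkas' lemma for the active constraints: a direction `h` that is feasible for them is
  -- feasible for small steps, so `v ⬝ᵥ h ≤ 0`.
  have hcone : v ∈ conicHull fun i => if a i ⬝ᵥ x = b i then a i else 0 := by
    refine mem_conicHull_of_forall_dotProduct_nonpos fun h hh => ?_
    have hev : ∀ᶠ ε in 𝓝[>] (0 : ℝ), x + ε • h ∈ polyhedron a b := by
      refine eventually_all.mpr fun i => ?_
      simpa [dotProduct_add, dotProduct_smul] using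
        eventually_add_mul_le (hx i) fun hi => by simpa [hi] using hh i
    obtain ⟨ε, hε, hε0 : 0 < ε⟩ := (hev.and self_mem_nhdsWithin).exists
    have := hv _ hε
    rw [add_sub_cancel_left, dotProduct_smul, smul_eq_mul] at this
    exact nonpos_of_mul_nonpos_right this hε0
  obtain ⟨w, hw, rfl⟩ := mem_conicHull.mp hcone
  refine ⟨fun i => if a i ⬝ᵥ x = b i then w i else 0, fun i => ?_, fun i hi => if_neg hi.ne,
    Finset.sum_congr rfl fun i _ => ?_⟩
  · dsimp only
    split_ifs
    exacts [hw i, le_rfl]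
  · by_cases h : a i ⬝ᵥ x = b i <;> simp [h]

def IsPolyhedron (S : Set (n → ℝ)) : Prop :=
  ∃ (ι : Type u) (_ : Fintype ι) (a : ι → n → ℝ) (b : ι → ℝ), S = polyhedron a b

theorem isPolyhedron_halfSpace (a : n → ℝ) (b : ℝ) : IsPolyhedron {x : n → ℝ | a ⬝ᵥ x ≤ b} :=
  ⟨PUnit, inferInstance, fun _ => a, fun _ => b, by ext; simp [polyhedron]⟩

theorem IsPolyhedron.inter {S T : Set (n → ℝ)} (hS : IsPolyhedron S) (hT : IsPolyhedron T) :
    IsPolyhedron (S ∩ T) := by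
  obtain ⟨ι, _, a, b, rfl⟩ := hS
  obtain ⟨ι', _, a', b', rfl⟩ := hT
  exact ⟨ι ⊕ ι', inferInstance, Sum.elim a a', Sum.elim b b', polyhedron_inter_polyhedron a b a' b'⟩

theorem IsPolyhedron.iInter {κ : Type u} [Finite κ] {S : κ → Set (n → ℝ)}
    (hS : ∀ j, IsPolyhedron (S j)) : IsPolyhedron (⋂ j, S j) := by
  choose ι _ a b hS using hS
  have := Fintype.ofFinite κ
  exact ⟨Σ j, ι j, inferInstance, fun p => a p.1 p.2, fun p => b p.1 p.2,
    by ext x; simp [hS, polyhedron, Sigma.forall]⟩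

theorem IsPolyhedron.preimage_add_const {S : Set (n → ℝ)} (hS : IsPolyhedron S) (t : n → ℝ) :
    IsPolyhedron ((· + t) ⁻¹' S) := by
  obtain ⟨ι, _, a, b, rfl⟩ := hS
  exact ⟨ι, inferInstance, a, fun i => b i - a i ⬝ᵥ t,
    by ext x; simp [polyhedron, dotProduct_add, le_sub_iff_add_le]⟩

theorem isPolyhedron_Icc (lo hi : n → ℝ) : IsPolyhedron (Set.Icc lo hi) := by
  classical
  have : Set.Icc lo hi = ⋂ k, ({x | -Pi.single k (1 : ℝ) ⬝ᵥ x ≤ -lo k} ∩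
      {x | Pi.single k (1 : ℝ) ⬝ᵥ x ≤ hi k}) := by
    ext x
    simp [Pi.le_def, neg_dotProduct, single_dotProduct, forall_and]
  rw [this]
  exact IsPolyhedron.iInter fun k => (isPolyhedron_halfSpace _ _).inter (isPolyhedron_halfSpace _ _)

theorem IsPolyhedron.isClosed {S : Set (n → ℝ)} (hS : IsPolyhedron S) : IsClosed S := by
  obtain ⟨ι, _, a, b, rfl⟩ := hS
  rw [polyhedron, Set.ofPred_forall]
  exact isClosed_iInter fun i =>
    isClosed_le (continuous_const.dotProduct continuous_id) continuous_const

theorem IsPolyhedron.convex {S : Set (n → ℝ)} (hS : IsPolyhedron S) : Convex ℝ S := by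
  obtain ⟨ι, _, a, b, rfl⟩ := hS
  rw [polyhedron, Set.ofPred_forall]
  exact convex_iInter fun i =>
    convex_halfSpace_le ⟨dotProduct_add (a i), fun c x => by simp [dotProduct_smul]⟩ (b i)

theorem IsPolyhedron.normalCone_inter_subset {S T : Set (n → ℝ)} (hS : IsPolyhedron S)
    (hT : IsPolyhedron T) {x : n → ℝ} (hx : x ∈ S ∩ T) :
    normalCone (S ∩ T) x ⊆ normalCone S x + normalCone T x := by
  obtain ⟨ι, _, a, b, rfl⟩ := hS
  obtain ⟨ι', _, a', b', rfl⟩ := hT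
  intro v hv
  rw [polyhedron_inter_polyhedron] at hx hv
  obtain ⟨w, hw, hslack, rfl⟩ := exists_eq_sum_smul_of_mem_normalCone_polyhedron hx hv
  rw [Fintype.sum_sum_type]
  exact Set.add_mem_add
    (sum_smul_mem_normalCone_polyhedron (fun i => hw (.inl i)) fun i => hslack (.inl i))
    (sum_smul_mem_normalCone_polyhedron (fun i => hw (.inr i)) fun i => hslack (.inr i))

end Polyhedron

theorem quadratic_add_penalty_le {a b z τ x₀ x δ : ℝ} (ha : 0 ≤ a) (hτ : 0 ≤ τ)
    (h : 0 ≤ (2 * a * x₀ + b - τ * δ) * (x - x₀)) :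
    a * x₀ ^ 2 + b * x₀ + z + τ / 2 * δ ^ 2 ≤ a * x ^ 2 + b * x + z + τ / 2 * (δ + x₀ - x) ^ 2 := by
  have : a * x ^ 2 + b * x + z + τ / 2 * (δ + x₀ - x) ^ 2 -
      (a * x₀ ^ 2 + b * x₀ + z + τ / 2 * δ ^ 2) =
      (2 * a * x₀ + b - τ * δ) * (x - x₀) + (a + τ / 2) * (x - x₀) ^ 2 := by ring
  rw [← sub_nonneg, this]
  exact add_nonneg h (mul_nonneg (add_nonneg ha (div_nonneg hτ zero_le_two)) (sq_nonneg _))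

section EnergySharing

variable {n L : ℕ}

theorem isPolyhedron_Qset (π : Fin L → Fin n → ℝ) (F : Fin L → ℝ) : IsPolyhedron (Qset π F) := by
  have : Qset π F = ({x | 1 ⬝ᵥ x ≤ 0} ∩ {x | -1 ⬝ᵥ x ≤ 0}) ∩
      ⋂ l, ({x | -π l ⬝ᵥ x ≤ F l} ∩ {x | π l ⬝ᵥ x ≤ F l}) := by
    ext x
    simp [Qset, le_antisymm_iff, neg_le, dotProduct, forall_and]
  rw [this]
  exact ((isPolyhedron_halfSpace _ _).inter (isPolyhedron_halfSpace _ _)).inter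
    (.iInter fun l => (isPolyhedron_halfSpace _ _).inter (isPolyhedron_halfSpace _ _))

theorem feasible7_iff {d c Dlo Dhi x : Fin n → ℝ} {π : Fin L → Fin n → ℝ} {F : Fin L → ℝ} :
    Feasible7 d c Dlo Dhi π F x ↔
      x ∈ (· + d) ⁻¹' Set.Icc Dlo Dhi ∩ (· + (d - c)) ⁻¹' Qset π F := by
  have : (fun k => d k + x k - c k) = x + (d - c) := by
    ext k
    simp only [Pi.add_apply, Pi.sub_apply]
    ring
  simp only [Feasible7, this, Set.mem_inter_iff, Set.mem_preimage, Set.mem_Icc, Pi.le_def,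
    Pi.add_apply, forall_and, add_comm (x _)]

theorem isGNE_of_mem_normalCone {α β ζ d c Dlo Dhi v₁ v₂ xs : Fin n → ℝ} {τ : ℝ}
    {π : Fin L → Fin n → ℝ} {F : Fin L → ℝ} (hα : ∀ k, 0 ≤ α k) (hτ : 0 < τ)
    (hxs : Feasible7 d c Dlo Dhi π F xs)
    (hv₁ : v₁ ∈ normalCone (Set.Icc Dlo Dhi) (xs + d))
    (hv₂ : v₂ ∈ normalCone (Qset π F) (xs + (d - c)))
    (hv : v₁ + v₂ = -fun k => 2 * α k * xs k + β k) :
    IsGNE α β ζ d c Dlo Dhi τ π F xs (xs + (d - c) + τ⁻¹ • v₂) (xs + (d - c)) (-(τ⁻¹ • v₂)) := by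
  obtain ⟨hbox, hQ⟩ := feasible7_iff.mp hxs
  refine ⟨fun k => ⟨⟨?_, hxs.1 k⟩, fun x y hy hlo hhi => ?_⟩, fun k => ?_, hQ,
    fun qc' δ' hδ' hqc' => ?_⟩
  · simp only [Pi.add_apply, Pi.sub_apply, Pi.neg_apply, Pi.smul_apply, smul_eq_mul]
    ring
  · have h₁ := apply_mul_sub_nonpos_of_mem_normalCone_Icc hv₁ hbox (y := x + d k)
      ⟨by linarith, by linarith⟩
    have h₂ : v₁ k + v₂ k = -(2 * α k * xs k + β k) := congrFun hv k
    simp only [Pi.add_apply, Pi.sub_apply, Pi.neg_apply, Pi.smul_apply, smul_eq_mul] at h₁ hy ⊢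
    obtain rfl : y = d k + x - c k + τ⁻¹ * v₂ k := by linarith
    have hgrad : 2 * α k * xs k + β k - τ * -(τ⁻¹ * v₂ k) = -v₁ k := by
      field_simp
      linarith
    convert quadratic_add_penalty_le (z := ζ k) (x := x) (x₀ := xs k) (δ := -(τ⁻¹ * v₂ k))
      (hα k) hτ.le (by rw [hgrad]; nlinarith) using 3 <;> ring
  · simp only [Pi.add_apply, Pi.sub_apply, Pi.neg_apply, Pi.smul_apply, smul_eq_mul]
    ring
  · have hproj := sum_sq_sub_le_of_sub_mem_normalCone (p := xs + (d - c))
      (q := xs + (d - c) + τ⁻¹ • v₂)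
      (by rw [add_sub_cancel_left]; exact smul_mem_normalCone (inv_nonneg.mpr hτ.le) hv₂) hqc'
    calc ∑ k, (-(τ⁻¹ • v₂)) k ^ 2
        = ∑ k, ((xs + (d - c)) k - (xs + (d - c) + τ⁻¹ • v₂) k) ^ 2 :=
          Finset.sum_congr rfl fun k _ => by simp
      _ ≤ ∑ k, (qc' k - (xs + (d - c) + τ⁻¹ • v₂) k) ^ 2 := hproj
      _ = ∑ k, δ' k ^ 2 := by simp only [hδ']

end EnergySharing

theorem gne_exists_general (I J L : ℕ)
    (α β ζ d w Δw Dlo Dhi : Fin (I + J) → ℝ) (τ : ℝ)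
    (π : Fin L → Fin (I + J) → ℝ) (F : Fin L → ℝ)
    (hα : ∀ k, 0 < α k) (hτ : 0 < τ)
    (hfeas : ∃ Δd, Feasible7 d (cvec I J w Δw) Dlo Dhi π F Δd) :
    ∃ Δd q qc δ : Fin (I + J) → ℝ,
      IsGNE α β ζ d (cvec I J w Δw) Dlo Dhi τ π F Δd q qc δ := by
  set c := cvec I J w Δw
  have hB : IsPolyhedron ((· + d) ⁻¹' Set.Icc Dlo Dhi) :=
    (isPolyhedron_Icc Dlo Dhi).preimage_add_const d
  have hQ : IsPolyhedron ((· + (d - c)) ⁻¹' Qset π F) :=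
    (isPolyhedron_Qset π F).preimage_add_const (d - c)
  have hcpt : IsCompact ((· + d) ⁻¹' Set.Icc Dlo Dhi ∩ (· + (d - c)) ⁻¹' Qset π F) :=
    ((Homeomorph.addRight d).isCompact_preimage.mpr isCompact_Icc).inter_right hQ.isClosed
  obtain ⟨x₀, hx₀⟩ := hfeas
  -- a solution of the centralized problem (7)
  obtain ⟨xs, hxs, hmin⟩ := hcpt.exists_isMinOn ⟨x₀, feasible7_iff.mp hx₀⟩
    (f := fun x => ∑ k, (α k * x k ^ 2 + β k * x k + ζ k)) (by fun_prop)
  obtain ⟨v₁, hv₁, v₂, hv₂, hv⟩ :=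
    hB.normalCone_inter_subset hQ hxs (hmin.neg_gradient_mem_normalCone (hB.inter hQ).convex hxs)
  rw [normalCone_preimage_add_const] at hv₁ hv₂
  exact ⟨_, _, _, _,
    isGNE_of_mem_normalCone (fun k => (hα k).le) hτ (feasible7_iff.mpr hxs) hv₁ hv₂ hv⟩

/-- if the centralized problem (7) is feasible, the energy-sharing
game has at least one generalized Nash equilibrium. -/
theorem gne_exists (I J L : ℕ)
    (α β ζ d w Δw Dlo Dhi : Fin (I + J) → ℝ) (τ : ℝ)
    (π : Fin L → Fin (I + J) → ℝ) (F : Fin L → ℝ)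
    (hα : ∀ k, 0 < α k) (hD : ∀ k, Dlo k ≤ Dhi k) (hτ : 0 < τ)
    (hfeas : ∃ Δd, Feasible7 d (cvec I J w Δw) Dlo Dhi π F Δd) :
    ∃ Δd q qc δ : Fin (I + J) → ℝ,
      IsGNE α β ζ d (cvec I J w Δw) Dlo Dhi τ π F Δd q qc δ :=
  gne_exists_general I J L α β ζ d w Δw Dlo Dhi τ π F hα hτ hfeas
end

section
/- Let (Δd*, q*, q^{c*}, δ*) be a generalized Nash equilibrium of the energy-sharing game. Then q_k^{c*} = d_k + Δd_k* − c_k for every k, and Δd* is an optimal solution of the centralized problem (7): for every Δd ∈ ℝ^n with D̲_k ≤ d_k + Δd_k ≤ D̄_k for all k and (d_k + Δd_k − c_k)_k ∈ Q, one has Σ_k f_k(Δd_k*) ≤ Σ_k f_k(Δd_k). -/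
open Finset

lemma lin_nonneg (A B : ℝ) (h : ∀ t : ℝ, 0 < t → t ≤ 1 → 0 ≤ A * t + B * t ^ 2) :
    0 ≤ A := by
  by_contra hA
  push_neg at hA
  rcases le_or_gt B 0 with hB | hB
  · have := h 1 one_pos le_rfl
    nlinarith
  · set t := min 1 (-A / (2 * B)) with ht
    have ht0 : 0 < t := lt_min one_pos (div_pos (by linarith) (by linarith))
    have ht1 : t ≤ 1 := min_le_left _ _
    have htB : t ≤ -A / (2 * B) := min_le_right _ _
    rw [le_div_iff₀ (by linarith)] at htB
    have := h t ht0 ht1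
    nlinarith


/-- at any generalized Nash equilibrium, the sharing schedule
satisfies `qc* k = d k + Δd* k - c k` for every `k`, and `Δd*` is optimal for
the centralized problem (7). -/
theorem gne_implies_central_optimal (I J L : ℕ)
    (α β ζ d w Δw Dlo Dhi : Fin (I + J) → ℝ) (τ : ℝ)
    (π : Fin L → Fin (I + J) → ℝ) (F : Fin L → ℝ)
    (hα : ∀ k, 0 < α k) (hD : ∀ k, Dlo k ≤ Dhi k) (hτ : 0 < τ)
    (Δdstar qstar qcstar δstar : Fin (I + J) → ℝ)
    (hGNE : IsGNE α β ζ d (cvec I J w Δw) Dlo Dhi τ π F Δdstar qstar qcstar δstar) :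
    (∀ k, qcstar k = d k + Δdstar k - cvec I J w Δw k) ∧
    (∀ Δd : Fin (I + J) → ℝ, Feasible7 d (cvec I J w Δw) Dlo Dhi π F Δd →
      ∑ k, (α k * (Δdstar k) ^ 2 + β k * Δdstar k + ζ k) ≤
      ∑ k, (α k * (Δd k) ^ 2 + β k * Δd k + ζ k)) := by
  set c := cvec I J w Δw with hc
  obtain ⟨huser, hδ, hQ, hop⟩ := hGNE
  -- Part 1
  have hqc : ∀ k, qcstar k = d k + Δdstar k - c k := by
    intro k
    have h1 := (huser k).1.1
    have h2 := hδ k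
    linarith
  refine ⟨hqc, ?_⟩
  intro Δd hfeas
  obtain ⟨hbox, hQΔ⟩ := hfeas
  set s : Fin (I + J) → ℝ := fun k => Δd k - Δdstar k with hs
  -- Operator variational inequality: 0 ≤ ∑ δ* s
  have hopVI : 0 ≤ ∑ k, δstar k * s k := by
    have key : ∀ t : ℝ, 0 < t → t ≤ 1 →
        0 ≤ (2 * ∑ k, δstar k * s k) * t + (∑ k, s k ^ 2) * t ^ 2 := by
      intro t ht0 ht1
      set qc' : Fin (I + J) → ℝ := fun k => qcstar k + t * s k with hqc'
      have hmem : qc' ∈ Qset π F := by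
        constructor
        · have e1 : ∑ k, qc' k
              = (1 - t) * (∑ k, qcstar k) + t * ∑ k, (d k + Δd k - c k) := by
            rw [mul_sum, mul_sum, ← sum_add_distrib]
            refine Finset.sum_congr rfl fun k _ => ?_
            simp only [hqc', hs]
            rw [hqc k]; ring
          rw [e1, hQ.1, hQΔ.1]; ring
        · intro l
          have e2 : ∑ k, π l k * qc' k
              = (1 - t) * (∑ k, π l k * qcstar k)
                + t * ∑ k, π l k * (d k + Δd k - c k) := by
            rw [mul_sum, mul_sum, ← sum_add_distrib]
            refine Finset.sum_congr rfl fun k _ => ?_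
            simp only [hqc', hs]
            rw [hqc k]; ring
          have h1 := hQ.2 l
          have h2 := hQΔ.2 l
          rw [e2]
          constructor <;> nlinarith [h1.1, h1.2, h2.1, h2.2]
      have := hop qc' (fun k => qc' k - qstar k) (fun k => rfl) hmem
      have e3 : ∑ k, (qc' k - qstar k) ^ 2
          = ∑ k, ((δstar k) ^ 2 + (2 * (δstar k * s k)) * t + s k ^ 2 * t ^ 2) := by
        refine Finset.sum_congr rfl fun k _ => ?_
        simp only [hqc']
        rw [hδ k]; ring
      rw [e3] at this
      simp only [sum_add_distrib, ← sum_mul, ← mul_sum] at this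
      rw [mul_sum] at this ⊢
      linarith
    exact le_of_mul_le_mul_left (by simpa using lin_nonneg _ _ key) two_pos
  -- Per-user variational inequality
  have huserVI : ∀ k, 0 ≤ (2 * α k * Δdstar k + β k - τ * δstar k) * s k := by
    intro k
    apply lin_nonneg _ ((α k + τ / 2) * s k ^ 2)
    intro t ht0 ht1
    set x := Δdstar k + t * s k with hx
    have hbk := hbox k
    have hbk' := (huser k).1.2
    have hxlo : Dlo k ≤ d k + x := by
      simp only [hx, hs]; nlinarith [hbk.1, hbk'.1]
    have hxhi : d k + x ≤ Dhi k := by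
      simp only [hx, hs]; nlinarith [hbk.2, hbk'.2]
    have := (huser k).2 x (d k + x - c k - δstar k) (by ring) hxlo hxhi
    have hδk := hδ k
    have hq := hqc k
    have e1 : qcstar k - qstar k = δstar k := by linarith
    have e2 : qcstar k - (d k + x - c k - δstar k) = δstar k - t * s k := by
      rw [hq]; simp only [hx]; ring
    rw [e1, e2] at this
    simp only [hx] at this
    nlinarith [this]
  -- Conclude
  have hsum : ∀ k, (α k * (Δdstar k) ^ 2 + β k * Δdstar k + ζ k)
      + τ * (δstar k * s k) ≤ α k * (Δd k) ^ 2 + β k * Δd k + ζ k := by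
    intro k
    have h1 := huserVI k
    have h2 := sq_nonneg (s k)
    have h3 := (hα k).le
    have hsk : Δd k = Δdstar k + s k := by simp [hs]
    rw [hsk]
    nlinarith
  have h4 : ∑ k, ((α k * Δdstar k ^ 2 + β k * Δdstar k + ζ k) + τ * (δstar k * s k))
      ≤ ∑ k, (α k * (Δd k) ^ 2 + β k * Δd k + ζ k) :=
    Finset.sum_le_sum (fun k _ => hsum k)
  rw [sum_add_distrib, ← mul_sum] at h4
  linarith [mul_nonneg hτ.le hopVI]
end

section
/- Suppose Δd̂ ∈ ℝ^n is feasible for the centralized problem (7), set q̂_k^c := d_k + Δd̂_k − c_k for all k, and suppose η̂ ∈ ℝ^n satisfies the optimality conditions: (a) for every k and every Δd_k ∈ ℝ with D̲_k ≤ d_k + Δd_k ≤ D̄_k, f_k(Δd_k) − f_k(Δd̂_k) + (Δd_k − Δd̂_k) η̂_k ≥ 0; and (b) for every q^c ∈ Q, Σ_k (q_k^c − q̂_k^c) η̂_k ≤ 0. Then, defining δ* := −η̂/τ, q^{c*} := q̂^c, and q_k* := q̂_k^c − δ_k* for all k, the tuple (Δd̂, q*, q^{c*}, δ*) is a generalized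 Nash equilibrium of the energy-sharing game. -/
open Finset

/-- if `Δdhat` is feasible for the centralized problem (7),
`qchat k = d k + Δdhat k - c k`, and the multiplier `η` satisfies the
optimality conditions (a) and (b), then setting `δ* = -η/τ`, `qc* = qchat`,
`q* k = qchat k - δ* k` yields a generalized Nash equilibrium. -/
theorem optimality_conditions_give_gne (I J L : ℕ)
    (α β ζ d w Δw Dlo Dhi : Fin (I + J) → ℝ) (τ : ℝ)
    (π : Fin L → Fin (I + J) → ℝ) (F : Fin L → ℝ)
    (hα : ∀ k, 0 < α k) (hD : ∀ k, Dlo k ≤ Dhi k) (hτ : 0 < τ)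
    (Δdhat η : Fin (I + J) → ℝ)
    (hfeas : Feasible7 d (cvec I J w Δw) Dlo Dhi π F Δdhat)
    (ha : ∀ k : Fin (I + J), ∀ x : ℝ, Dlo k ≤ d k + x → d k + x ≤ Dhi k →
      0 ≤ (α k * x ^ 2 + β k * x + ζ k)
          - (α k * (Δdhat k) ^ 2 + β k * Δdhat k + ζ k)
          + (x - Δdhat k) * η k)
    (hb : ∀ qc ∈ Qset π F,
      ∑ k, (qc k - (d k + Δdhat k - cvec I J w Δw k)) * η k ≤ 0) :
    IsGNE α β ζ d (cvec I J w Δw) Dlo Dhi τ π F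
      Δdhat
      (fun k => (d k + Δdhat k - cvec I J w Δw k) - (-η k / τ))
      (fun k => d k + Δdhat k - cvec I J w Δw k)
      (fun k => -η k / τ) := by
  obtain ⟨hbnd, hQ⟩ := hfeas
  constructor
  · intro k
    refine ⟨⟨by ring, (hbnd k).1, (hbnd k).2⟩, ?_⟩
    intro x y hy hlo hhi
    have hyx : y = d k + x - cvec I J w Δw k - (-η k / τ) := by linarith
    subst hyx
    have h := ha k x hlo hhi
    have hsq : 0 ≤ (x - Δdhat k) ^ 2 := sq_nonneg _
    have hτ' : τ ≠ 0 := ne_of_gt hτ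
    have e1 : (d k + Δdhat k - cvec I J w Δw k) -
        ((d k + Δdhat k - cvec I J w Δw k) - (-η k / τ)) = -η k / τ := by ring
    have e2 : (d k + Δdhat k - cvec I J w Δw k) -
        (d k + x - cvec I J w Δw k - (-η k / τ)) = (Δdhat k - x) + (-η k / τ) := by ring
    rw [e1, e2]
    have key : τ / 2 * ((Δdhat k - x) + (-η k / τ)) ^ 2
        = τ / 2 * (-η k / τ) ^ 2 + τ / 2 * (Δdhat k - x) ^ 2 + (x - Δdhat k) * η k := by
      field_simp
      ring
    rw [key]
    nlinarith [sq_nonneg (Δdhat k - x)]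
  · refine ⟨fun k => by ring, hQ, ?_⟩
    intro qc' δ' hδ' hQ'
    have hb' := hb qc' hQ'
    have h1 : ∀ k, (δ' k) ^ 2 = (-η k / τ) ^ 2 +
        (qc' k - (d k + Δdhat k - cvec I J w Δw k)) ^ 2
        - (2 / τ) * ((qc' k - (d k + Δdhat k - cvec I J w Δw k)) * η k) := by
      intro k
      rw [hδ' k]
      have hτ' : τ ≠ 0 := ne_of_gt hτ
      field_simp
      ring
    have hsum : ∑ k, (δ' k) ^ 2 = ∑ k, (-η k / τ) ^ 2
        + ∑ k, (qc' k - (d k + Δdhat k - cvec I J w Δw k)) ^ 2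
        - (2 / τ) * ∑ k, (qc' k - (d k + Δdhat k - cvec I J w Δw k)) * η k := by
      rw [Finset.mul_sum, ← Finset.sum_add_distrib, ← Finset.sum_sub_distrib]
      exact Finset.sum_congr rfl fun k _ => h1 k
    have hpos : 0 ≤ ∑ k, (qc' k - (d k + Δdhat k - cvec I J w Δw k)) ^ 2 :=
      Finset.sum_nonneg fun k _ => sq_nonneg _
    have h2 : (2 / τ) * ∑ k, (qc' k - (d k + Δdhat k - cvec I J w Δw k)) * η k ≤ 0 :=
      mul_nonpos_of_nonneg_of_nonpos (by positivity) hb'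
    rw [hsum]
    linarith
end
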